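/- Let X be a compact metric space and Y > 0. There exists a prediction strategy (with real-valued predictions) that guarantees, for every sequence of signals x₁, x₂, … ∈ X and observations y₁, y₂, … ∈ [−Y, Y], and for every continuous prediction rule F : X → ℝ: limsup_{N→∞} ( (1/N) Σ_{n=1}^N (yₙ − μₙ)² − (1/N) Σ_{n=1}^N (yₙ − F(xₙ))² ) ≤ 0. -/

import Mathlib

open scoped BigOperators

section AuxUP

open Real

noncomputable def clipR (Y t : ℝ) : ℝ := max (-Y) (min Y t)

lemma clipR_mem {Y t : ℝ} (hY : 0 ≤ Y) : |clipR Y t| ≤ Y := by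
  rw [abs_le]; constructor
  · exact le_max_left _ _
  · exact max_le (by linarith) (min_le_left _ _)

lemma clipR_loss {Y y t : ℝ} (hy : |y| ≤ Y) : (y - clipR Y t)^2 ≤ (y - t)^2 := by
  rw [abs_le] at hy
  rcases le_total t (-Y) with h | h
  · have : clipR Y t = -Y := by
      simp only [clipR]; rw [min_eq_right (by linarith), max_eq_left (by linarith)]
    rw [this]; nlinarith
  · rcases le_total Y t with h2 | h2
    · have : clipR Y t = Y := by
        simp only [clipR]; rw [min_eq_left h2, max_eq_right (by linarith)]
      rw [this]; nlinarith
    · have : clipR Y t = t := by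
        simp only [clipR]; rw [min_eq_right h2, max_eq_right h]
      rw [this]

lemma clipR_lipschitz (Y s t : ℝ) : |clipR Y s - clipR Y t| ≤ |s - t| := by
  have h1 : |min Y s - min Y t| ≤ |s - t| := by
    simpa using abs_min_sub_min_le_max Y s Y t
  calc |clipR Y s - clipR Y t| ≤ max |(-Y) - (-Y)| |min Y s - min Y t| :=
        abs_max_sub_max_le_max _ _ _ _
    _ ≤ |s - t| := by simpa using h1



noncomputable section UP

variable {X : Type*}

/-- cumulative loss of expert `k` on history `l` -/
def Lk (g : ℕ → X → ℝ) (Y : ℝ) (k : ℕ) (l : List (X × ℝ)) : ℝ :=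
  (l.map fun q => (q.2 - g k q.1)^2).sum

def ww (g : ℕ → X → ℝ) (Y : ℝ) (l : List (X × ℝ)) (k : ℕ) : ℝ :=
  (1/2)^(k+1) * Real.exp (-(1/(32*Y^2)) * Lk g Y k l)

def WW (g : ℕ → X → ℝ) (Y : ℝ) (l : List (X × ℝ)) : ℝ := ∑' k, ww g Y l k

def numer (g : ℕ → X → ℝ) (Y : ℝ) (l : List (X × ℝ)) (a : X) : ℝ := ∑' k, ww g Y l k * g k a

def sig (g : ℕ → X → ℝ) (Y : ℝ) (l : List (X × ℝ)) (a : X) : ℝ :=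
  numer g Y l a / WW g Y l

variable {g : ℕ → X → ℝ} {Y : ℝ}

lemma Lk_nonneg (l : List (X × ℝ)) (k : ℕ) : 0 ≤ Lk g Y k l := by
  apply List.sum_nonneg; intro z hz
  simp only [List.mem_map] at hz
  obtain ⟨q, -, rfl⟩ := hz; positivity

lemma ww_pos (l : List (X × ℝ)) (k : ℕ) : 0 < ww g Y l k := by
  unfold ww; positivity

lemma ww_le (hY : 0 < Y) (l : List (X × ℝ)) (k : ℕ) : ww g Y l k ≤ (1/2)^(k+1) := by
  unfold ww
  have h1 : Real.exp (-(1/(32*Y^2)) * Lk g Y k l) ≤ 1 := by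
    rw [Real.exp_le_one_iff]
    have := Lk_nonneg (g := g) (Y := Y) l k
    have : (0:ℝ) ≤ (1/(32*Y^2)) * Lk g Y k l := by positivity
    linarith
  calc (1/2)^(k+1) * Real.exp (-(1/(32*Y^2)) * Lk g Y k l) ≤ (1/2)^(k+1) * 1 :=
        mul_le_mul_of_nonneg_left h1 (by positivity)
    _ = (1/2)^(k+1) := mul_one _

lemma summable_half : Summable (fun k : ℕ => ((1:ℝ)/2)^(k+1)) := by
  have := (summable_geometric_of_lt_one (by norm_num : (0:ℝ) ≤ 1/2) (by norm_num)).mul_left (1/2 : ℝ)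
  apply this.congr; intro k; rw [pow_succ]; ring

lemma summable_ww (hY : 0 < Y) (l : List (X × ℝ)) : Summable (ww g Y l) :=
  Summable.of_nonneg_of_le (fun k => (ww_pos l k).le) (ww_le hY l) summable_half

lemma WW_pos (hY : 0 < Y) (l : List (X × ℝ)) : 0 < WW g Y l :=
  Summable.tsum_pos (summable_ww hY l) (fun k => (ww_pos l k).le) 0 (ww_pos l 0)

lemma summable_wg (hY : 0 < Y) (hg : ∀ k a, |g k a| ≤ Y) (l : List (X × ℝ)) (a : X) :
    Summable (fun k => ww g Y l k * g k a) := by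
  apply Summable.of_norm_bounded ((summable_ww hY l).mul_right Y)
  intro k
  rw [Real.norm_eq_abs, abs_mul, abs_of_pos (ww_pos l k)]
  exact mul_le_mul_of_nonneg_left (hg k a) (ww_pos l k).le

lemma abs_sig_le (hY : 0 < Y) (hg : ∀ k a, |g k a| ≤ Y) (l : List (X × ℝ)) (a : X) :
    |sig g Y l a| ≤ Y := by
  have hW := WW_pos (g := g) hY l
  rw [sig, abs_div, abs_of_pos hW, div_le_iff₀ hW]
  have h1 : |numer g Y l a| ≤ ∑' k, |ww g Y l k * g k a| := by
    have hs : Summable (fun k => ‖ww g Y l k * g k a‖) := by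
      simp only [Real.norm_eq_abs]; exact (summable_wg hY hg l a).abs
    have h := norm_tsum_le_tsum_norm (f := fun k => ww g Y l k * g k a) hs
    simp only [Real.norm_eq_abs] at h
    rw [numer]; exact h
  refine h1.trans ?_
  have h2 : ∀ k, |ww g Y l k * g k a| ≤ Y * ww g Y l k := by
    intro k
    rw [abs_mul, abs_of_pos (ww_pos l k), mul_comm]
    exact mul_le_mul_of_nonneg_right (hg k a) (ww_pos l k).le
  calc (∑' k, |ww g Y l k * g k a|) ≤ ∑' k, Y * ww g Y l k :=
        Summable.tsum_le_tsum h2 ((summable_wg hY hg l a).abs) ((summable_ww hY l).mul_left Y)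
    _ = Y * WW g Y l := tsum_mul_left

lemma aux_exp' {w B : ℝ} (hB0 : 0 ≤ B) (hw2 : w^2 ≤ (1/2)*B) (hB : B ≤ 1/8) :
    Real.exp (w - B) ≤ 1 + w := by
  have hw16 : w^2 ≤ 1/16 := by linarith
  have hwu : w ≤ 1/4 := by nlinarith
  have hwl : -(1/4) ≤ w := by nlinarith
  have h2 : 0 < 1 - (w - B) := by linarith
  have h1 : Real.exp (w - B) * (1 - (w - B)) ≤ 1 := by
    have hh := Real.add_one_le_exp (-(w - B))
    calc Real.exp (w - B) * (1 - (w - B)) ≤ Real.exp (w - B) * Real.exp (-(w - B)) :=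
          mul_le_mul_of_nonneg_left (by linarith) (Real.exp_pos _).le
      _ = 1 := by rw [← Real.exp_add]; simp
  have h3 : 1 ≤ (1 + w) * (1 - (w - B)) := by nlinarith
  exact le_of_mul_le_mul_right (h1.trans h3) h2

lemma key_ineq {Y : ℝ} (hY : 0 < Y) {y t μ : ℝ} (hy : |y| ≤ Y) (ht : |t| ≤ Y) (hμ : |μ| ≤ Y) :
    Real.exp (-(1/(32*Y^2)) * (y - t)^2) ≤
      Real.exp (-(1/(32*Y^2)) * (y - μ)^2) * (1 + 2*(1/(32*Y^2))*(y-μ)*(t-μ)) := by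
  have hY2 : (0:ℝ) < Y^2 := by positivity
  have hη : (0:ℝ) < 1/(32*Y^2) := by positivity
  rw [abs_le] at hy ht hμ
  have hexp : Real.exp (-(1/(32*Y^2)) * (y - t) ^ 2)
      = Real.exp (-(1/(32*Y^2)) * (y - μ) ^ 2)
        * Real.exp (2*(1/(32*Y^2))*(y-μ)*(t-μ) - (1/(32*Y^2))*(t-μ)^2) := by
    rw [← Real.exp_add]; congr 1; ring
  rw [hexp, mul_le_mul_iff_right₀ (Real.exp_pos _)]
  apply aux_exp'
  · positivity
  · have h1 : (y-μ)^2 ≤ 4*Y^2 := by nlinarith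
    have h2 : ((y-μ)*(t-μ))^2 = (y-μ)^2 * (t-μ)^2 := by ring
    have h3 : ((y-μ)*(t-μ))^2 ≤ (4*Y^2) * (t-μ)^2 := by
      rw [h2]; exact mul_le_mul_of_nonneg_right h1 (sq_nonneg _)
    have h5 : (2*(1/(32*Y^2))*(y-μ)*(t-μ))^2 = 4 * (1/(32*Y^2))^2 * ((y-μ)*(t-μ))^2 := by ring
    rw [h5]
    have h4 : 4 * (1/(32*Y^2))^2 * ((y-μ)*(t-μ))^2 ≤ 4 * (1/(32*Y^2))^2 * ((4*Y^2) * (t-μ)^2) := by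
      apply mul_le_mul_of_nonneg_left h3; positivity
    refine h4.trans (le_of_eq ?_)
    field_simp
    ring
  · have h1 : (t-μ)^2 ≤ 4*Y^2 := by nlinarith
    calc (1/(32*Y^2))*(t-μ)^2 ≤ (1/(32*Y^2))*(4*Y^2) := mul_le_mul_of_nonneg_left h1 hη.le
      _ = 1/8 := by field_simp; ring

lemma ww_append (l : List (X × ℝ)) (a : X) (b : ℝ) (k : ℕ) :
    ww g Y (l ++ [(a,b)]) k = ww g Y l k * Real.exp (-(1/(32*Y^2)) * (b - g k a)^2) := by
  unfold ww Lk
  rw [List.map_append, List.sum_append, mul_assoc, ← Real.exp_add]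
  congr 2
  simp only [List.map_cons, List.map_nil, List.sum_cons, List.sum_nil]
  ring

lemma step (hY : 0 < Y) (hg : ∀ k a, |g k a| ≤ Y) (l : List (X × ℝ)) (a : X) {b : ℝ}
    (hb : |b| ≤ Y) :
    WW g Y (l ++ [(a,b)]) ≤ Real.exp (-(1/(32*Y^2)) * (b - sig g Y l a)^2) * WW g Y l := by
  have hW := WW_pos (g := g) hY l
  set μ := sig g Y l a with hμdef
  have hμ : |μ| ≤ Y := abs_sig_le hY hg l a
  set E := Real.exp (-(1/(32*Y^2)) * (b - μ)^2) with hE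
  set C1 := E * (1 - 2*(1/(32*Y^2))*(b-μ)*μ) with hC1
  set C2 := E * (2*(1/(32*Y^2))*(b-μ)) with hC2
  have hperk : ∀ k, ww g Y (l ++ [(a,b)]) k ≤ C1 * ww g Y l k + C2 * (ww g Y l k * g k a) := by
    intro k
    rw [ww_append]
    have hk := key_ineq hY hb (hg k a) hμ
    have := mul_le_mul_of_nonneg_left hk (ww_pos (g := g) (Y := Y) l k).le
    refine this.trans (le_of_eq ?_)
    rw [hC1, hC2, hE]; ring
  have hsum2 : Summable (fun k => C1 * ww g Y l k + C2 * (ww g Y l k * g k a)) :=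
    ((summable_ww hY l).mul_left C1).add ((summable_wg hY hg l a).mul_left C2)
  have hsum1 : Summable (ww g Y (l ++ [(a,b)])) := summable_ww hY _
  have h1 : WW g Y (l ++ [(a,b)]) ≤ ∑' k, (C1 * ww g Y l k + C2 * (ww g Y l k * g k a)) :=
    Summable.tsum_le_tsum hperk hsum1 hsum2
  have h2 : (∑' k, (C1 * ww g Y l k + C2 * (ww g Y l k * g k a)))
      = C1 * WW g Y l + C2 * numer g Y l a := by
    rw [Summable.tsum_add ((summable_ww hY l).mul_left C1) ((summable_wg hY hg l a).mul_left C2),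
      tsum_mul_left, tsum_mul_left]
    rfl
  have h3 : numer g Y l a = μ * WW g Y l := by
    rw [hμdef, sig, div_mul_cancel₀ _ hW.ne']
  refine h1.trans (le_of_eq ?_)
  rw [h2, h3, hC1, hC2, hE]
  ring

def hist (x : ℕ → X) (y : ℕ → ℝ) (n : ℕ) : List (X × ℝ) :=
  (List.range n).map fun i => (x i, y i)

lemma hist_succ (x : ℕ → X) (y : ℕ → ℝ) (n : ℕ) :
    hist x y (n+1) = hist x y n ++ [(x n, y n)] := by
  unfold hist; rw [List.range_succ, List.map_append]; rfl

lemma WW_nil (hY : 0 < Y) : WW g Y ([] : List (X × ℝ)) = 1 := by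
  have h : ∀ k : ℕ, ww g Y ([] : List (X × ℝ)) k = 1/2/2^k := by
    intro k
    unfold ww Lk
    simp only [List.map_nil, List.sum_nil, mul_zero, Real.exp_zero, mul_one]
    rw [pow_succ, div_pow, one_pow]
    ring
  rw [WW, tsum_congr h, tsum_geometric_two' 1]

lemma Lk_hist (x : ℕ → X) (y : ℕ → ℝ) (k : ℕ) :
    ∀ N, Lk g Y k (hist x y N) = ∑ i ∈ Finset.range N, (y i - g k (x i))^2 := by
  intro N
  induction N with
  | zero => simp [hist, Lk]
  | succ n ih =>
    rw [hist_succ, Finset.sum_range_succ, ← ih]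
    unfold Lk
    rw [List.map_append, List.sum_append]
    simp

lemma potential (hY : 0 < Y) (hg : ∀ k a, |g k a| ≤ Y) (x : ℕ → X) (y : ℕ → ℝ)
    (hy : ∀ n, |y n| ≤ Y) :
    ∀ N, WW g Y (hist x y N)
      ≤ Real.exp (-(1/(32*Y^2)) * ∑ i ∈ Finset.range N, (y i - sig g Y (hist x y i) (x i))^2) := by
  intro N
  induction N with
  | zero =>
    have h0 : hist x y 0 = ([] : List (X × ℝ)) := by simp [hist]
    rw [h0, WW_nil hY]
    simp
  | succ n ih =>
    rw [hist_succ]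
    calc WW g Y (hist x y n ++ [(x n, y n)])
        ≤ Real.exp (-(1/(32*Y^2)) * (y n - sig g Y (hist x y n) (x n))^2) * WW g Y (hist x y n) :=
          step hY hg _ _ (hy n)
      _ ≤ Real.exp (-(1/(32*Y^2)) * (y n - sig g Y (hist x y n) (x n))^2)
            * Real.exp (-(1/(32*Y^2)) * ∑ i ∈ Finset.range n, (y i - sig g Y (hist x y i) (x i))^2) :=
          mul_le_mul_of_nonneg_left ih (Real.exp_pos _).le
      _ = Real.exp (-(1/(32*Y^2)) * ∑ i ∈ Finset.range (n+1), (y i - sig g Y (hist x y i) (x i))^2) := by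
          rw [← Real.exp_add, Finset.sum_range_succ]; congr 1; ring

lemma regret (hY : 0 < Y) (hg : ∀ k a, |g k a| ≤ Y) (x : ℕ → X) (y : ℕ → ℝ)
    (hy : ∀ n, |y n| ≤ Y) (k : ℕ) (N : ℕ) :
    ∑ i ∈ Finset.range N, (y i - sig g Y (hist x y i) (x i))^2
      ≤ (∑ i ∈ Finset.range N, (y i - g k (x i))^2) + (32*Y^2) * ((↑k+1) * Real.log 2) := by
  set S := ∑ i ∈ Finset.range N, (y i - sig g Y (hist x y i) (x i))^2 with hS
  set L := ∑ i ∈ Finset.range N, (y i - g k (x i))^2 with hL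
  set η : ℝ := 1/(32*Y^2) with hη
  have hηpos : 0 < η := by rw [hη]; positivity
  have hlow : (1/2:ℝ)^(k+1) * Real.exp (-η * L) ≤ WW g Y (hist x y N) := by
    have h1 : ww g Y (hist x y N) k ≤ WW g Y (hist x y N) :=
      Summable.le_tsum (summable_ww hY _) k (fun j _ => (ww_pos _ j).le)
    rw [ww, Lk_hist, ← hL] at h1
    exact h1
  have hchain : (1/2:ℝ)^(k+1) * Real.exp (-η * L) ≤ Real.exp (-η * S) :=
    hlow.trans (potential hY hg x y hy N)
  have hlhspos : (0:ℝ) < (1/2:ℝ)^(k+1) * Real.exp (-η * L) := by positivity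
  have hlog := Real.log_le_log hlhspos hchain
  rw [Real.log_mul (by positivity) (Real.exp_pos _).ne', Real.log_exp, Real.log_exp,
    Real.log_pow] at hlog
  have hlog2 : Real.log (1/2 : ℝ) = -Real.log 2 := by
    rw [one_div, Real.log_inv]
  rw [hlog2] at hlog
  -- hlog : (k+1) * (-log 2) + (-η * L) ≤ -η * S
  have h : η * S ≤ η * L + (↑(k+1)) * Real.log 2 := by
    push_cast at hlog ⊢
    linarith
  have h32 : (32*Y^2) * η = 1 := by rw [hη]; field_simp
  calc S = (32*Y^2) * (η * S) := by rw [← mul_assoc, h32, one_mul]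
    _ ≤ (32*Y^2) * (η * L + (↑(k+1)) * Real.log 2) :=
        mul_le_mul_of_nonneg_left h (by positivity)
    _ = L + (32*Y^2) * ((↑k+1) * Real.log 2) := by
        rw [mul_add, ← mul_assoc, h32, one_mul]; push_cast; ring

end UP

end AuxUP

/-- Given a prediction strategy `σ` and sequences of signals `x` and observations `y`,
`preds σ x y n` is the prediction output on round `n`. -/
noncomputable def preds {X P : Type*} (σ : List (X × P) → X → P)
    (x : ℕ → X) (y : ℕ → P) (n : ℕ) : P :=
  σ ((List.range n).map fun i => (x i, y i)) (x n)

/-- Theorem 1: existence of a universal prediction strategy for `C(X)`. -/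
theorem stmt1 {X : Type*} [MetricSpace X] [CompactSpace X] (Y : ℝ) (hY : 0 < Y) :
    ∃ σ : List (X × ℝ) → X → ℝ,
      ∀ x : ℕ → X, ∀ y : ℕ → ℝ, (∀ n, y n ∈ Set.Icc (-Y) Y) →
        ∀ F : C(X, ℝ),
          Filter.limsup (fun N : ℕ =>
            (1 / (N : ℝ)) * ∑ n ∈ Finset.range N, (y n - preds σ x y n) ^ 2 -
            (1 / (N : ℝ)) * ∑ n ∈ Finset.range N, (y n - F (x n)) ^ 2)
            Filter.atTop ≤ 0 := by
  rcases isEmpty_or_nonempty X with hE | hNE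
  · exact ⟨fun _ _ => 0, fun x => (hE.false (x 0)).elim⟩
  · obtain ⟨G, hG⟩ := TopologicalSpace.exists_dense_seq C(X, ℝ)
    set g : ℕ → X → ℝ := fun k a => clipR Y (G k a) with hgdef
    have hg : ∀ k (a : X), |g k a| ≤ Y := fun k a => clipR_mem hY.le
    refine ⟨sig g Y, ?_⟩
    intro x y hy F
    have hy' : ∀ n, |y n| ≤ Y := fun n => abs_le.mpr ⟨(hy n).1, (hy n).2⟩
    have hpred : ∀ n, preds (sig g Y) x y n = sig g Y (hist x y n) (x n) := fun n => rfl
    set S : ℕ → ℝ := fun N => ∑ n ∈ Finset.range N, (y n - sig g Y (hist x y n) (x n))^2 with hSdef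
    set T : ℕ → ℝ := fun N => ∑ n ∈ Finset.range N, (y n - F (x n))^2 with hTdef
    set u : ℕ → ℝ := fun N => (1/(N:ℝ)) * S N - (1/(N:ℝ)) * T N with hudef
    have hgoal_eq : (fun N : ℕ =>
        (1 / (N : ℝ)) * ∑ n ∈ Finset.range N, (y n - preds (sig g Y) x y n) ^ 2 -
        (1 / (N : ℝ)) * ∑ n ∈ Finset.range N, (y n - F (x n)) ^ 2) = u := by
      funext N
      simp only [hudef, hSdef, hTdef]
      congr 1
    rw [hgoal_eq]
    -- lower bound / coboundedness
    set B : ℝ := (Y + ‖F‖)^2 with hBdef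
    have hB0 : 0 ≤ B := sq_nonneg _
    have hTle : ∀ N, T N ≤ N * B := by
      intro N
      have hterm : ∀ n, (y n - F (x n))^2 ≤ B := by
        intro n
        have h1 : |y n - F (x n)| ≤ Y + ‖F‖ := by
          have := ContinuousMap.norm_coe_le_norm F (x n)
          rw [Real.norm_eq_abs] at this
          have h2 := hy' n
          calc |y n - F (x n)| ≤ |y n| + |F (x n)| := abs_sub _ _
            _ ≤ Y + ‖F‖ := add_le_add h2 this
        calc (y n - F (x n))^2 = |y n - F (x n)|^2 := (sq_abs _).symm
          _ ≤ (Y + ‖F‖)^2 := by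
              apply pow_le_pow_left₀ (abs_nonneg _) h1
      calc T N ≤ ∑ _n ∈ Finset.range N, B := Finset.sum_le_sum (fun n _ => hterm n)
        _ = N * B := by rw [Finset.sum_const, Finset.card_range]; simp [mul_comm]
    have hulow : ∀ N, -B ≤ u N := by
      intro N
      have hS0 : 0 ≤ (1/(N:ℝ)) * S N := by
        apply mul_nonneg (by positivity)
        apply Finset.sum_nonneg; intro i _; positivity
      have hT' : (1/(N:ℝ)) * T N ≤ B := by
        rcases Nat.eq_zero_or_pos N with h0 | hpos
        · subst h0; simp [hB0]
        · have hNpos : (0:ℝ) < N := by exact_mod_cast hpos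
          calc (1/(N:ℝ)) * T N ≤ (1/(N:ℝ)) * (N * B) :=
                mul_le_mul_of_nonneg_left (hTle N) (by positivity)
            _ = B := by field_simp
      simp only [hudef]; linarith
    have hbddb : Filter.IsBoundedUnder (· ≥ ·) Filter.atTop u :=
      Filter.isBoundedUnder_of ⟨-B, fun N => hulow N⟩
    have hcob : Filter.IsCoboundedUnder (· ≤ ·) Filter.atTop u :=
      hbddb.isCoboundedUnder_le
    -- main eventual bound
    have hmain : ∀ ε : ℝ, 0 < ε → Filter.limsup u Filter.atTop ≤ ε := by
      intro ε hε
      apply Filter.limsup_le_of_le hcob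
      set ε' : ℝ := min 1 (ε/(2*(4*Y+1))) with hε'def
      have hε'pos : 0 < ε' := by
        apply lt_min one_pos; positivity
      have hε'le1 : ε' ≤ 1 := min_le_left _ _
      have hε'le : (4*Y+1) * ε' ≤ ε/2 := by
        have h1 : ε' ≤ ε/(2*(4*Y+1)) := min_le_right _ _
        have h2 : (0:ℝ) < 4*Y+1 := by linarith
        calc (4*Y+1) * ε' ≤ (4*Y+1) * (ε/(2*(4*Y+1))) := mul_le_mul_of_nonneg_left h1 h2.le
          _ = ε/2 := by field_simp
      obtain ⟨k, hk⟩ := hG.exists_dist_lt F hε'pos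
      -- pointwise comparison
      have hpt : ∀ n, (y n - g k (x n))^2 ≤ (y n - F (x n))^2 + (4*Y+1)*ε' := by
        intro n
        set a := x n with hadef
        set c : ℝ := clipR Y (F a) with hcdef
        have hd : |G k a - F a| ≤ ε' := by
          have h1 : dist (G k a) (F a) ≤ dist (G k) F := ContinuousMap.dist_apply_le_dist a
          rw [Real.dist_eq] at h1
          rw [dist_comm] at hk
          linarith
        have h1 : |g k a - c| ≤ ε' := by
          rw [hgdef, hcdef]
          exact (clipR_lipschitz Y (G k a) (F a)).trans hd
        have h2 : (y n - c)^2 ≤ (y n - F a)^2 := clipR_loss (hy' n)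
        have hyc : |y n - c| ≤ 2*Y := by
          have := hy' n
          have hc : |c| ≤ Y := clipR_mem hY.le
          calc |y n - c| ≤ |y n| + |c| := abs_sub _ _
            _ ≤ 2*Y := by linarith
        have hcross : -((y n - c) * (g k a - c)) ≤ 2*Y*ε' := by
          calc -((y n - c) * (g k a - c)) ≤ |(y n - c) * (g k a - c)| := neg_le_abs _
            _ = |y n - c| * |g k a - c| := abs_mul _ _
            _ ≤ (2*Y) * ε' := mul_le_mul hyc h1 (abs_nonneg _) (by linarith)
        have hsq : (g k a - c)^2 ≤ ε' := by
          calc (g k a - c)^2 = |g k a - c|^2 := (sq_abs _).symm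
            _ ≤ ε'^2 := pow_le_pow_left₀ (abs_nonneg _) h1 2
            _ ≤ ε' := by nlinarith
        have hexpand : (y n - g k a)^2
            = (y n - c)^2 - 2*((y n - c) * (g k a - c)) + (g k a - c)^2 := by ring
        rw [hexpand]
        linarith
      have hsumpt : ∀ N : ℕ, (∑ i ∈ Finset.range N, (y i - g k (x i))^2) ≤ T N + N * ((4*Y+1)*ε') := by
        intro N
        calc (∑ i ∈ Finset.range N, (y i - g k (x i))^2)
            ≤ ∑ i ∈ Finset.range N, ((y i - F (x i))^2 + (4*Y+1)*ε') :=
              Finset.sum_le_sum (fun i _ => hpt i)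
          _ = T N + N * ((4*Y+1)*ε') := by
              rw [Finset.sum_add_distrib, Finset.sum_const, Finset.card_range]
              simp [hTdef, mul_comm]
      set C : ℝ := (32*Y^2) * ((↑k+1) * Real.log 2) with hCdef
      have hreg : ∀ N, S N ≤ T N + N * ((4*Y+1)*ε') + C := by
        intro N
        calc S N ≤ (∑ i ∈ Finset.range N, (y i - g k (x i))^2) + C := regret hY hg x y hy' k N
          _ ≤ T N + N * ((4*Y+1)*ε') + C := by linarith [hsumpt N]
      -- eventually C/N < ε/2
      have htend : Filter.Tendsto (fun N : ℕ => C / N) Filter.atTop (nhds 0) :=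
        tendsto_const_div_atTop_nhds_zero_nat C
      have hev1 : ∀ᶠ N : ℕ in Filter.atTop, C / N < ε/2 :=
        htend.eventually_lt_const (by linarith)
      have hev2 : ∀ᶠ N : ℕ in Filter.atTop, 1 ≤ N := Filter.eventually_ge_atTop 1
      filter_upwards [hev1, hev2] with N hN1 hN2
      have hNpos : (0:ℝ) < N := by exact_mod_cast hN2
      have hstep : (1/(N:ℝ)) * S N ≤ (1/(N:ℝ)) * (T N + N * ((4*Y+1)*ε') + C) :=
        mul_le_mul_of_nonneg_left (hreg N) (by positivity)
      have hsplit : (1/(N:ℝ)) * (T N + N * ((4*Y+1)*ε') + C)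
          = (1/(N:ℝ)) * T N + (4*Y+1)*ε' + C/N := by
        field_simp
      simp only [hudef]
      rw [hsplit] at hstep
      linarith
    by_contra hcon
    push_neg at hcon
    have := hmain (Filter.limsup u Filter.atTop / 2) (by linarith)
    linarith
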